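/- Weak formulation of second-order Riesz transforms on a finite cyclic group: let G = Z/NZ with discrete Laplacian Δ, and for mean-zero f define R² f = X⁺ X⁻ (-Δ)⁻¹ f (well-defined on mean-zero functions). Then for all mean-zero f, g: (R² f, g) = -2 ∫_0^∞ ∑_{τ=±} (1/2)(X^τ P_t f, X^τ P_t g) dt, where P_t = e^{tΔ}. -/

import Mathlib

open scoped BigOperators

/-- The discrete Laplacian on `ℤ/Nℤ` as a continuous linear operator. -/
noncomputable def cyclicLaplacian (N : ℕ) [NeZero N] :
    (ZMod N → ℂ) →L[ℂ] (ZMod N → ℂ) :=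
  LinearMap.toContinuousLinearMap
    { toFun := fun f x => f (x + 1) - 2 * f x + f (x - 1)
      map_add' := by intro f g; funext x; simp; ring
      map_smul' := by intro c f; funext x; simp; ring }

/-!
Write `P_t = exp (t • Δ)` and `φ t = ∑ x, P_t f x * conj (P_t g x)`. Since `Δ` commutes with
`P_t` and is symmetric, summation by parts gives `φ' t = -2 ∑ x, X⁺P_t f x * conj (X⁺P_t g x)`,
and the backward-difference half of the integrand equals the forward one after the shift
`x ↦ x - 1`. The right-hand side is therefore `∫₀^∞ φ' = -φ 0 = -(f, g) = (Δu, g)`, provided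
`φ t → 0` with an integrable derivative. Both follow from exponential decay of `‖P_t h‖²` for
mean-zero `h`: its derivative is `-2 ‖X⁺P_t h‖²`, and `X⁺` is injective on the
finite-dimensional space of mean-zero functions, hence bounded below there (a spectral gap),
so Grönwall applies.
-/

open NormedSpace Finset ComplexConjugate

theorem norm_sum_mul_conj_le {ι : Type*} [Fintype ι] (a b : ι → ℂ) :
    ‖∑ x, a x * conj (b x)‖ ≤ (∑ x, ‖a x‖ ^ 2 + ∑ x, ‖b x‖ ^ 2) / 2 := by
  calc ‖∑ x, a x * conj (b x)‖ ≤ ∑ x, ‖a x‖ * ‖b x‖ := by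
        simpa only [norm_mul, Complex.norm_conj] using norm_sum_le univ fun x => a x * conj (b x)
    _ ≤ ∑ x, (‖a x‖ ^ 2 + ‖b x‖ ^ 2) / 2 :=
        sum_le_sum fun x _ => by nlinarith [two_mul_le_add_sq ‖a x‖ ‖b x‖]
    _ = _ := by rw [← sum_div, sum_add_distrib]

theorem le_mul_exp_of_hasDerivAt_le_mul {ψ ψ' : ℝ → ℝ} {k t : ℝ}
    (hψ : ∀ s, HasDerivAt ψ (ψ' s) s) (hle : ∀ s, ψ' s ≤ k * ψ s) (ht : 0 ≤ t) :
    ψ t ≤ ψ 0 * Real.exp (k * t) := by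
  have := le_gronwallBound_of_liminf_deriv_right_le (ε := 0) (a := 0) (b := t)
    (fun s _ => (hψ s).continuousAt.continuousWithinAt)
    (fun s _ _ hr => (hψ s).hasDerivWithinAt.liminf_right_slope_le hr) le_rfl
    (fun s _ => by simpa using hle s) t ⟨ht, le_rfl⟩
  simpa [gronwallBound_ε0] using this

section CyclicSums

variable {N : ℕ} [NeZero N]

theorem cyclicLaplacian_apply (h : ZMod N → ℂ) (x : ZMod N) :
    cyclicLaplacian N h x = h (x + 1) - 2 * h x + h (x - 1) := rfl

theorem sum_cyclicLaplacian_apply (h : ZMod N → ℂ) : ∑ x, cyclicLaplacian N h x = 0 := by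
  have hadd := Equiv.sum_comp (Equiv.addRight (1 : ZMod N)) h
  have hsub := Equiv.sum_comp (Equiv.subRight (1 : ZMod N)) h
  simp only [Equiv.coe_addRight, Equiv.subRight_apply] at hadd hsub
  simp only [cyclicLaplacian_apply, sum_add_distrib, sum_sub_distrib, ← mul_sum]
  linear_combination hadd + hsub

theorem sum_fwdDiff_mul_conj_fwdDiff (a b : ZMod N → ℂ) :
    ∑ x, fwdDiff 1 a x * conj (fwdDiff 1 b x) = -∑ x, cyclicLaplacian N a x * conj (b x) := by
  have hdiag := Equiv.sum_comp (Equiv.addRight (1 : ZMod N)) fun x => a x * conj (b x)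
  have hoff := Equiv.sum_comp (Equiv.addRight (1 : ZMod N)) fun x => a (x - 1) * conj (b x)
  simp only [Equiv.coe_addRight, add_sub_cancel_right] at hdiag hoff
  simp only [fwdDiff, cyclicLaplacian_apply, map_sub, sub_mul, mul_sub, add_mul, two_mul,
    sum_add_distrib, sum_sub_distrib]
  linear_combination hdiag - hoff

theorem sum_mul_conj_cyclicLaplacian (a b : ZMod N → ℂ) :
    ∑ x, a x * conj (cyclicLaplacian N b x) = ∑ x, cyclicLaplacian N a x * conj (b x) := by
  have hba := congrArg conj (sum_fwdDiff_mul_conj_fwdDiff b a)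
  simp only [map_sum, map_mul, map_neg, Complex.conj_conj, mul_comm (conj _)] at hba
  rw [← neg_inj, ← sum_fwdDiff_mul_conj_fwdDiff, hba]

theorem sum_norm_fwdDiff_sq_le (h : ZMod N → ℂ) :
    ∑ x, ‖fwdDiff 1 h x‖ ^ 2 ≤ 4 * ∑ x, ‖h x‖ ^ 2 := by
  have hshift := Equiv.sum_comp (Equiv.addRight (1 : ZMod N)) fun x => ‖h x‖ ^ 2
  simp only [Equiv.coe_addRight] at hshift
  calc ∑ x, ‖fwdDiff 1 h x‖ ^ 2 ≤ ∑ x, (2 * ‖h (x + 1)‖ ^ 2 + 2 * ‖h x‖ ^ 2) := by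
        refine sum_le_sum fun x _ => ?_
        change ‖h (x + 1) - h x‖ ^ 2 ≤ _
        have := norm_sub_le (h (x + 1)) (h x)
        nlinarith [norm_nonneg (h (x + 1) - h x), sq_nonneg (‖h (x + 1)‖ - ‖h x‖)]
    _ = 4 * ∑ x, ‖h x‖ ^ 2 := by
        rw [sum_add_distrib, ← mul_sum, ← mul_sum, hshift]; ring

theorem eq_zero_of_fwdDiff_eq_zero_of_sum_eq_zero {h : ZMod N → ℂ} (hd : fwdDiff 1 h = 0)
    (hs : ∑ x, h x = 0) : h = 0 := by
  have hconst : ∀ n : ℕ, h n = h 0 := by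
    intro n
    induction n with
    | zero => simp
    | succ n ih => rw [Nat.cast_succ, ← ih, ← sub_eq_zero]; exact congrFun hd n
  have hconst' : ∀ x, h x = h 0 := fun x => by simpa using hconst x.val
  rw [sum_congr rfl fun x _ => hconst' x, sum_const, card_univ, ZMod.card, nsmul_eq_mul,
    mul_eq_zero] at hs
  funext x
  rw [hconst' x, Pi.zero_apply]
  exact hs.resolve_left (Nat.cast_ne_zero.2 (NeZero.ne N))

end CyclicSums

theorem exists_pos_mul_sum_norm_sq_le_sum_norm_fwdDiff_sq (N : ℕ) [NeZero N] :
    ∃ c > 0, ∀ h : ZMod N → ℂ, ∑ x, h x = 0 →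
      c * ∑ x, ‖h x‖ ^ 2 ≤ ∑ x, ‖fwdDiff 1 h x‖ ^ 2 := by
  let sumL : EuclideanSpace ℂ (ZMod N) →ₗ[ℂ] ℂ :=
    { toFun := fun v => ∑ x, v x
      map_add' := fun v w => by simp [sum_add_distrib]
      map_smul' := fun c v => by simp [mul_sum] }
  let diffL : EuclideanSpace ℂ (ZMod N) →ₗ[ℂ] EuclideanSpace ℂ (ZMod N) :=
    { toFun := fun v => WithLp.toLp 2 (fwdDiff 1 v.ofLp)
      map_add' := fun v w => by ext x; simp [fwdDiff]; ring
      map_smul' := fun c v => by ext x; simp [fwdDiff]; ring }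
  have hinj : Function.Injective (diffL ∘ₗ (LinearMap.ker sumL).subtype) := by
    rw [← LinearMap.ker_eq_bot, LinearMap.ker_eq_bot']
    rintro ⟨v, hv⟩ hdv
    have h0 := eq_zero_of_fwdDiff_eq_zero_of_sum_eq_zero (congrArg WithLp.ofLp hdv) hv
    ext x
    exact congrFun h0 x
  obtain ⟨c, hc, hbound⟩ := antilipschitzWith_iff_exists_mul_le_norm.1
    (((LinearMap.injective_iff_antilipschitz _).1 hinj).imp fun _ h => h.2)
  refine ⟨c ^ 2, by positivity, fun h hh => ?_⟩
  have hcomp := hbound ⟨WithLp.toLp 2 h, hh⟩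
  have hnorm : ∀ v : ZMod N → ℂ, ∑ x, ‖v x‖ ^ 2 = ‖WithLp.toLp 2 v‖ ^ 2 := fun v =>
    (EuclideanSpace.norm_sq_eq (WithLp.toLp 2 v)).symm
  rw [hnorm, hnorm, ← mul_pow]
  exact pow_le_pow_left₀ (by positivity) hcomp 2

noncomputable def heatSemigroup (N : ℕ) [NeZero N] (t : ℝ) :
    (ZMod N → ℂ) →L[ℂ] (ZMod N → ℂ) :=
  exp (t • cyclicLaplacian N)

section HeatSemigroup

variable {N : ℕ} [NeZero N]

theorem heatSemigroup_zero : heatSemigroup N 0 = 1 := by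
  have hzero : (0 : ℝ) • cyclicLaplacian N = 0 := by ext; simp
  rw [heatSemigroup, hzero, exp_zero]

theorem hasDerivAt_heatSemigroup_apply (h : ZMod N → ℂ) (t : ℝ) :
    HasDerivAt (fun s => heatSemigroup N s h) (cyclicLaplacian N (heatSemigroup N t h)) t :=
  ((ContinuousLinearMap.apply ℂ (ZMod N → ℂ) h).restrictScalars ℝ).hasFDerivAt.comp_hasDerivAt t
    (hasDerivAt_exp_smul_const' (cyclicLaplacian N) t)

theorem sum_heatSemigroup_apply (h : ZMod N → ℂ) (t : ℝ) :
    ∑ x, heatSemigroup N t h x = ∑ x, h x := by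
  have hderiv (s : ℝ) : HasDerivAt (fun s => ∑ x, heatSemigroup N s h x) 0 s := by
    simpa [sum_cyclicLaplacian_apply] using
      HasDerivAt.fun_sum (u := univ) fun x _ =>
        hasDerivAt_pi.1 (hasDerivAt_heatSemigroup_apply h s) x
  simpa [heatSemigroup_zero] using is_const_of_deriv_eq_zero
    (fun s => (hderiv s).differentiableAt) (fun s => (hderiv s).deriv) t 0

theorem hasDerivAt_sum_heatSemigroup_mul_conj (a b : ZMod N → ℂ) (t : ℝ) :
    HasDerivAt (fun s => ∑ x, heatSemigroup N s a x * conj (heatSemigroup N s b x))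
      (-2 * ∑ x, fwdDiff 1 (heatSemigroup N t a) x * conj (fwdDiff 1 (heatSemigroup N t b) x))
      t := by
  have hcoord (h : ZMod N → ℂ) (x : ZMod N) :=
    hasDerivAt_pi.1 (hasDerivAt_heatSemigroup_apply h t) x
  refine (HasDerivAt.fun_sum (u := univ) fun x _ =>
    (hcoord a x).fun_mul (hcoord b x).star).congr_deriv ?_
  simp only [← starRingEnd_apply, sum_add_distrib, sum_mul_conj_cyclicLaplacian,
    sum_fwdDiff_mul_conj_fwdDiff]
  ring

end HeatSemigroup

theorem exists_sum_norm_heatSemigroup_sq_le (N : ℕ) [NeZero N] :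
    ∃ c > 0, ∀ h : ZMod N → ℂ, ∑ x, h x = 0 → ∀ t, 0 ≤ t →
      ∑ x, ‖heatSemigroup N t h x‖ ^ 2 ≤ (∑ x, ‖h x‖ ^ 2) * Real.exp (-c * t) := by
  obtain ⟨c, hc, hgap⟩ := exists_pos_mul_sum_norm_sq_le_sum_norm_fwdDiff_sq N
  refine ⟨2 * c, by positivity, fun h hh t ht => ?_⟩
  have hderiv (s : ℝ) : HasDerivAt (fun s => ∑ x, ‖heatSemigroup N s h x‖ ^ 2)
      (-2 * ∑ x, ‖fwdDiff 1 (heatSemigroup N s h) x‖ ^ 2) s := by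
    have hC : HasDerivAt (fun s => ((∑ x, ‖heatSemigroup N s h x‖ ^ 2 : ℝ) : ℂ))
        ((-2 * ∑ x, ‖fwdDiff 1 (heatSemigroup N s h) x‖ ^ 2 : ℝ) : ℂ) s := by
      push_cast
      simpa only [Complex.mul_conj'] using hasDerivAt_sum_heatSemigroup_mul_conj h h s
    simpa only [Function.comp_def, Complex.reCLM_apply, Complex.ofReal_re] using
      Complex.reCLM.hasFDerivAt.comp_hasDerivAt s hC
  have hdecay (s : ℝ) : -2 * ∑ x, ‖fwdDiff 1 (heatSemigroup N s h) x‖ ^ 2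
      ≤ -(2 * c) * ∑ x, ‖heatSemigroup N s h x‖ ^ 2 := by
    have := hgap _ ((sum_heatSemigroup_apply h s).trans hh)
    linarith
  simpa [heatSemigroup_zero] using le_mul_exp_of_hasDerivAt_le_mul hderiv hdecay ht

open Filter Topology MeasureTheory Set in
theorem integral_sum_fwdDiff_heatSemigroup_mul_conj (N : ℕ) [NeZero N] {f g : ZMod N → ℂ}
    (hf : ∑ x, f x = 0) (hg : ∑ x, g x = 0) :
    ∫ t in Ioi (0 : ℝ), ∑ x, fwdDiff 1 (heatSemigroup N t f) x
        * conj (fwdDiff 1 (heatSemigroup N t g) x)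
      = (1 / 2) * ∑ x, f x * conj (g x) := by
  obtain ⟨c, hc, hdecay⟩ := exists_sum_norm_heatSemigroup_sq_le N
  set I : ℝ → ℂ := fun t => ∑ x, fwdDiff 1 (heatSemigroup N t f) x
    * conj (fwdDiff 1 (heatSemigroup N t g) x)
  set φ : ℝ → ℂ := fun t => ∑ x, heatSemigroup N t f x * conj (heatSemigroup N t g x)
  set E : ℝ := ∑ x, ‖f x‖ ^ 2 + ∑ x, ‖g x‖ ^ 2
  have hφ_le (t : ℝ) (ht : 0 ≤ t) : ‖φ t‖ ≤ E / 2 * Real.exp (-c * t) := by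
    have := norm_sum_mul_conj_le (heatSemigroup N t f) (heatSemigroup N t g)
    nlinarith [hdecay f hf t ht, hdecay g hg t ht]
  have hI_le (t : ℝ) (ht : 0 ≤ t) : ‖I t‖ ≤ 2 * E * Real.exp (-c * t) := by
    have := norm_sum_mul_conj_le (fwdDiff 1 (heatSemigroup N t f)) (fwdDiff 1 (heatSemigroup N t g))
    nlinarith [hdecay f hf t ht, hdecay g hg t ht, sum_norm_fwdDiff_sq_le (heatSemigroup N t f),
      sum_norm_fwdDiff_sq_le (heatSemigroup N t g)]
  have hcont (h : ZMod N → ℂ) : Continuous fun t => heatSemigroup N t h :=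
    continuous_iff_continuousAt.2 fun t => (hasDerivAt_heatSemigroup_apply h t).continuousAt
  have hI_cont : Continuous I := by
    have hPf := hcont f
    have hPg := hcont g
    simp only [I, fwdDiff]
    fun_prop
  have hI_int : IntegrableOn I (Ioi 0) :=
    ((exp_neg_integrableOn_Ioi 0 hc).const_mul (2 * E)).mono' hI_cont.aestronglyMeasurable.restrict
      (by filter_upwards [ae_restrict_mem measurableSet_Ioi] with t ht using hI_le t ht.le)
  have hexp : Tendsto (fun t => E / 2 * Real.exp (-c * t)) atTop (𝓝 0) := by
    simpa using (Real.tendsto_exp_comp_nhds_zero.2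
      ((tendsto_const_mul_atBot_of_neg (neg_neg_of_pos hc)).2 tendsto_id)).const_mul (E / 2)
  have hφ_lim : Tendsto φ atTop (𝓝 0) :=
    squeeze_zero_norm' (eventually_ge_atTop 0 |>.mono hφ_le) hexp
  have hftc := integral_Ioi_of_hasDerivAt_of_tendsto'
    (fun t _ => hasDerivAt_sum_heatSemigroup_mul_conj f g t) (hI_int.const_mul (-2)) hφ_lim
  rw [integral_const_mul, zero_sub] at hftc
  simp only [heatSemigroup_zero, one_apply_eq_self] at hftc
  linear_combination -hftc / 2

theorem weak_formulation_second_order_riesz_general (N : ℕ) [NeZero N]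
    (f g u : ZMod N → ℂ)
    (hf : ∑ x, f x = 0) (hg : ∑ x, g x = 0)
    (huf : ∀ x, -(u (x + 1) - 2 * u x + u (x - 1)) = f x) :
    ∑ x, (u (x + 1) - 2 * u x + u (x - 1)) * (starRingEnd ℂ) (g x)
      = -2 * ∫ t in Set.Ioi (0 : ℝ),
          ((1 / 2 : ℂ) * ∑ x,
              (NormedSpace.exp (t • cyclicLaplacian N) f (x + 1)
                  - NormedSpace.exp (t • cyclicLaplacian N) f x)
                * (starRingEnd ℂ) (NormedSpace.exp (t • cyclicLaplacian N) g (x + 1)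
                  - NormedSpace.exp (t • cyclicLaplacian N) g x)
            + (1 / 2 : ℂ) * ∑ x,
              (NormedSpace.exp (t • cyclicLaplacian N) f x
                  - NormedSpace.exp (t • cyclicLaplacian N) f (x - 1))
                * (starRingEnd ℂ) (NormedSpace.exp (t • cyclicLaplacian N) g x
                  - NormedSpace.exp (t • cyclicLaplacian N) g (x - 1))) := by
  have hbwd (a b : ZMod N → ℂ) : ∑ x, (a x - a (x - 1)) * conj (b x - b (x - 1))
      = ∑ x, (a (x + 1) - a x) * conj (b (x + 1) - b x) := by
    simpa only [Equiv.subRight_apply, sub_add_cancel] using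
      Equiv.sum_comp (Equiv.subRight (1 : ZMod N)) fun x =>
        (a (x + 1) - a x) * conj (b (x + 1) - b x)
  have hintegral := integral_sum_fwdDiff_heatSemigroup_mul_conj N hf hg
  simp only [heatSemigroup, fwdDiff] at hintegral
  simp only [hbwd, ← add_mul, add_halves, one_mul, hintegral, ← huf, neg_mul, sum_neg_distrib]
  ring

/-- weak formulation of the second-order Riesz transform on `ℤ/Nℤ`:
for mean-zero `f, g`, with `u = (-Δ)⁻¹ f` (so `R² f = X⁺X⁻u = Δ u`) and
`P_t = e^{tΔ}`, one has
`(R² f, g) = -2 ∫₀^∞ ∑_{τ=±} (1/2)(X^τ P_t f, X^τ P_t g) dt`. -/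
theorem weak_formulation_second_order_riesz (N : ℕ) (hN : 2 ≤ N) [NeZero N]
    (f g u : ZMod N → ℂ)
    (hf : ∑ x, f x = 0) (hg : ∑ x, g x = 0) (hu : ∑ x, u x = 0)
    (huf : ∀ x, -(u (x + 1) - 2 * u x + u (x - 1)) = f x) :
    ∑ x, (u (x + 1) - 2 * u x + u (x - 1)) * (starRingEnd ℂ) (g x)
      = -2 * ∫ t in Set.Ioi (0 : ℝ),
          ((1 / 2 : ℂ) * ∑ x,
              (NormedSpace.exp (t • cyclicLaplacian N) f (x + 1)
                  - NormedSpace.exp (t • cyclicLaplacian N) f x)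
                * (starRingEnd ℂ) (NormedSpace.exp (t • cyclicLaplacian N) g (x + 1)
                  - NormedSpace.exp (t • cyclicLaplacian N) g x)
            + (1 / 2 : ℂ) * ∑ x,
              (NormedSpace.exp (t • cyclicLaplacian N) f x
                  - NormedSpace.exp (t • cyclicLaplacian N) f (x - 1))
                * (starRingEnd ℂ) (NormedSpace.exp (t • cyclicLaplacian N) g x
                  - NormedSpace.exp (t • cyclicLaplacian N) g (x - 1))) :=
  weak_formulation_second_order_riesz_general N f g u hf hg huf
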